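/- The group with presentation ⟨a, b ∣ a²b⁻³ = 1⟩ (the trefoil knot group) is not isomorphic to the infinite cyclic group ℤ. -/

import Mathlib

/-- The single relator `a²b⁻³` of the presentation `⟨a, b ∣ a²b⁻³ = 1⟩`. -/
def trefoilRels : Set (FreeGroup (Fin 2)) :=
  {(FreeGroup.of 0) ^ 2 * (FreeGroup.of 1) ^ (-3 : ℤ)}

-- A transposition `a` and a 3-cycle `b` satisfy the relator because `a² = 1 = b³`.
def trefoilToPerm : PresentedGroup trefoilRels →* Equiv.Perm (Fin 3) :=
  PresentedGroup.toGroup (f := ![Equiv.swap 0 1, finRotate 3]) <| by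
    rintro r rfl
    simp only [map_mul, map_pow, map_zpow, FreeGroup.lift_apply_of]
    decide

theorem trefoil_generators_not_commute :
    ¬ Commute (PresentedGroup.of 0 : PresentedGroup trefoilRels) (PresentedGroup.of 1) := by
  intro h
  have h_image := h.map trefoilToPerm
  simp only [trefoilToPerm, PresentedGroup.toGroup.of, commute_iff_eq] at h_image
  exact absurd h_image (by decide)

/-- The trefoil knot group `⟨a, b ∣ a²b⁻³ = 1⟩` is not isomorphic to the infinite
cyclic group `ℤ`. -/
theorem trefoil_group_not_iso_int :
    ¬ Nonempty (PresentedGroup trefoilRels ≃* Multiplicative ℤ) := by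
  rintro ⟨e⟩
  exact trefoil_generators_not_commute (Commute.of_map e.injective (Commute.all _ _))
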